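/- Let (X,μ) and (Y,ν) be σ-finite measure spaces and let T be a linear operator defined on simple functions of X taking values in measurable functions on Y. If ‖Tf‖_{L^∞(Y,ν)} ≤ C‖f‖_{L^∞(X,μ)} and ‖Tf‖_{L¹(Y,ν)} ≤ C‖f‖_{L¹(X,μ)} for all simple f, then for every 1 ≤ p ≤ ∞, ‖Tf‖_{L^p(Y,ν)} ≤ C‖f‖_{L^p(X,μ)} for all simple f (and hence T extends boundedly to L^p with norm at most C). -/

import Mathlib

/-!
Fix `t > 0` and split `f = g + h`, where `g` is `f` truncated at height `t / C`. The `L^∞` bound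
gives `|T g| ≤ t`, hence `(|T f| - t)₊ ≤ |T h|`, and the `L¹` bound then yields
`∫ (|T f| - t)₊ dν ≤ ∫ (C |f| - t)₊ dμ` for every `t > 0`. Since
`w ^ q = ∫₀^∞ q (q - 1) t ^ (q - 2) (w - t)₊ dt`, integrating these inequalities against
`q (q - 1) t ^ (q - 2) dt` gives `∫ |T f| ^ q ≤ ∫ (C |f|) ^ q`.
-/

open MeasureTheory Set
open scoped ENNReal

theorem integral_mul_rpow_mul_sub {q x : ℝ} (hq : 1 < q) (hx : 0 ≤ x) :
    ∫ t in (0)..x, q * (q - 1) * t ^ (q - 2) * (x - t) = x ^ q := by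
  have hq1 : q - 1 ≠ 0 := by linarith
  have hsplit : EqOn (fun t : ℝ => q * (q - 1) * t ^ (q - 2) * (x - t))
      (fun t => q * (q - 1) * x * t ^ (q - 2) - q * (q - 1) * t ^ (q - 1)) (uIcc 0 x) := by
    intro t ht
    have ht0 : 0 ≤ t := by rw [uIcc_of_le hx] at ht; exact ht.1
    have : t ^ (q - 1) = t ^ (q - 2) * t := by
      rw [← Real.rpow_add_one' ht0 (by linarith)]; ring_nf
    simp only [this]; ring
  have h2 : (-1 : ℝ) < q - 2 := by linarith
  have h1 : (-1 : ℝ) < q - 1 := by linarith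
  rw [intervalIntegral.integral_congr hsplit, intervalIntegral.integral_sub
      ((intervalIntegral.intervalIntegrable_rpow' h2).const_mul _)
      ((intervalIntegral.intervalIntegrable_rpow' h1).const_mul _),
    intervalIntegral.integral_const_mul, intervalIntegral.integral_const_mul,
    integral_rpow (Or.inl h2), integral_rpow (Or.inl h1),
    show q - 2 + 1 = q - 1 by ring, show q - 1 + 1 = q by ring,
    Real.zero_rpow (by linarith), Real.zero_rpow (by linarith),
    show x ^ q = x ^ (q - 1) * x by rw [← Real.rpow_add_one' hx (by linarith)]; ring_nf]
  field_simp
  ring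

theorem lintegral_Ioi_mul_rpow_mul_tsub {q : ℝ} (hq : 1 < q) (x : ℝ≥0∞) :
    ∫⁻ t in Ioi 0, ENNReal.ofReal (q * (q - 1) * t ^ (q - 2)) * (x - ENNReal.ofReal t) = x ^ q := by
  have hρ : ∀ t ∈ Ioi (0 : ℝ), 0 < q * (q - 1) * t ^ (q - 2) := fun t ht => by
    have : (0 : ℝ) < t := ht
    have : 0 < q - 1 := by linarith
    positivity
  rcases eq_or_ne x ∞ with rfl | hx
  · rw [setLIntegral_congr_fun measurableSet_Ioi (g := fun _ => ∞) fun t ht => by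
      rw [ENNReal.top_sub ENNReal.ofReal_ne_top,
        ENNReal.mul_top (ENNReal.ofReal_pos.2 (hρ t ht)).ne']]
    simp [ENNReal.top_rpow_of_pos (by linarith : 0 < q)]
  obtain ⟨r, hr, rfl⟩ : ∃ r : ℝ, 0 ≤ r ∧ ENNReal.ofReal r = x :=
    ⟨x.toReal, ENNReal.toReal_nonneg, ENNReal.ofReal_toReal hx⟩
  have hF : ∀ t ∈ Ioi (0 : ℝ),
      ENNReal.ofReal (q * (q - 1) * t ^ (q - 2)) * (ENNReal.ofReal r - ENNReal.ofReal t) =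
        ENNReal.ofReal (q * (q - 1) * t ^ (q - 2) * (r - t)) := fun t ht => by
    rw [ENNReal.ofReal_mul (hρ t ht).le, ENNReal.ofReal_sub _ (le_of_lt ht)]
  rw [setLIntegral_congr_fun measurableSet_Ioi hF, ← Ioc_union_Ioi_eq_Ioi hr,
    lintegral_union measurableSet_Ioi (Ioc_disjoint_Ioi le_rfl),
    setLIntegral_congr_fun measurableSet_Ioi (g := fun _ => 0) fun t ht =>
      ENNReal.ofReal_of_nonpos (mul_nonpos_of_nonneg_of_nonpos (hρ t (hr.trans_lt ht)).le
        (by linarith [mem_Ioi.1 ht])), lintegral_zero, add_zero,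
    ← ofReal_integral_eq_lintegral_ofReal, ← intervalIntegral.integral_of_le hr,
    integral_mul_rpow_mul_sub hq hr, ENNReal.ofReal_rpow_of_nonneg hr (by linarith)]
  · exact (intervalIntegrable_iff_integrableOn_Ioc_of_le hr).1
      (((intervalIntegral.intervalIntegrable_rpow' (by linarith)).const_mul _).mul_continuousOn
        (continuousOn_const.sub continuousOn_id))
  · exact (ae_restrict_iff' measurableSet_Ioc).2 (.of_forall fun t ht =>
      mul_nonneg (hρ t ht.1).le (sub_nonneg.2 ht.2))

theorem lintegral_rpow_eq_lintegral_Ioi_mul_lintegral_tsub {Z : Type*} [MeasurableSpace Z]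
    (m : Measure Z) [SFinite m] {q : ℝ} (hq : 1 < q) {u : Z → ℝ≥0∞} (hu : Measurable u) :
    ∫⁻ z, u z ^ q ∂m = ∫⁻ t in Ioi 0,
      ENNReal.ofReal (q * (q - 1) * t ^ (q - 2)) * (∫⁻ z, (u z - ENNReal.ofReal t) ∂m) := calc
  ∫⁻ z, u z ^ q ∂m = ∫⁻ z, (∫⁻ t in Ioi (0 : ℝ),
      ENNReal.ofReal (q * (q - 1) * t ^ (q - 2)) * (u z - ENNReal.ofReal t)) ∂m :=
    lintegral_congr fun z => (lintegral_Ioi_mul_rpow_mul_tsub hq (u z)).symm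
  _ = ∫⁻ t in Ioi 0, ∫⁻ z,
      ENNReal.ofReal (q * (q - 1) * t ^ (q - 2)) * (u z - ENNReal.ofReal t) ∂m :=
    lintegral_lintegral_swap (f := fun z t =>
      ENNReal.ofReal (q * (q - 1) * t ^ (q - 2)) * (u z - ENNReal.ofReal t))
      (Measurable.aemeasurable (by unfold Function.uncurry; fun_prop))
  _ = _ := lintegral_congr fun t => lintegral_const_mul _ (by fun_prop)

theorem lintegral_rpow_le_of_forall_lintegral_tsub_le {X Y : Type*} [MeasurableSpace X]
    [MeasurableSpace Y] {μ : Measure X} {ν : Measure Y} [SFinite μ] [SFinite ν] {q : ℝ}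
    (hq : 1 < q) {u : Y → ℝ≥0∞} {v : X → ℝ≥0∞} (hv : Measurable v)
    (h : ∀ t > 0, ∫⁻ y, (u y - ENNReal.ofReal t) ∂ν ≤ ∫⁻ x, (v x - ENNReal.ofReal t) ∂μ) :
    ∫⁻ y, u y ^ q ∂ν ≤ ∫⁻ x, v x ^ q ∂μ := by
  have hq0 : q ≠ 0 := by linarith
  -- `u` need not be measurable: pass to a measurable minorant of `u ^ q` with the same integral
  obtain ⟨g, hgm, hgu, hg⟩ := exists_measurable_le_lintegral_eq ν (fun y => u y ^ q)
  have hgu' : ∀ y, g y ^ q⁻¹ ≤ u y := fun y => by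
    simpa only [ENNReal.rpow_rpow_inv hq0] using
      ENNReal.rpow_le_rpow (hgu y) (inv_nonneg.2 (by linarith : (0 : ℝ) ≤ q))
  calc ∫⁻ y, u y ^ q ∂ν = ∫⁻ y, (g y ^ q⁻¹) ^ q ∂ν := by
        simp_rw [ENNReal.rpow_inv_rpow hq0]; exact hg
    _ = ∫⁻ t in Ioi 0, ENNReal.ofReal (q * (q - 1) * t ^ (q - 2)) *
          (∫⁻ y, (g y ^ q⁻¹ - ENNReal.ofReal t) ∂ν) :=
        lintegral_rpow_eq_lintegral_Ioi_mul_lintegral_tsub ν hq (hgm.pow_const _)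
    _ ≤ ∫⁻ t in Ioi 0, ENNReal.ofReal (q * (q - 1) * t ^ (q - 2)) *
          (∫⁻ x, (v x - ENNReal.ofReal t) ∂μ) :=
        setLIntegral_mono' measurableSet_Ioi fun t ht => by
          gcongr
          exact (lintegral_mono fun y => tsub_le_tsub_right (hgu' y) _).trans (h t ht)
    _ = ∫⁻ x, v x ^ q ∂μ := (lintegral_rpow_eq_lintegral_Ioi_mul_lintegral_tsub μ hq hv).symm

def symmClamp (s r : ℝ) : ℝ := max (-s) (min r s)

theorem symmClamp_zero {s : ℝ} (hs : 0 ≤ s) : symmClamp s 0 = 0 := by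
  simp [symmClamp, hs]

theorem abs_symmClamp_le {s : ℝ} (hs : 0 ≤ s) (r : ℝ) : |symmClamp s r| ≤ s :=
  abs_le.2 ⟨le_max_left _ _, max_le (by linarith) (min_le_right _ _)⟩

theorem ofReal_abs_sub_symmClamp {s : ℝ} (hs : 0 ≤ s) (r : ℝ) :
    ENNReal.ofReal |r - symmClamp s r| = ENNReal.ofReal (|r| - s) := by
  unfold symmClamp
  rcases le_total r (-s) with h | h
  · rw [min_eq_left (by linarith), max_eq_left h, abs_of_nonpos (by linarith),
      abs_of_nonpos (by linarith)]
    ring_nf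
  rcases le_total r s with h' | h'
  · rw [min_eq_left h', max_eq_right h, sub_self, abs_zero, ENNReal.ofReal_zero,
      ENNReal.ofReal_of_nonpos (by linarith [abs_le.2 ⟨h, h'⟩])]
  · rw [min_eq_right h', max_eq_right (by linarith), abs_of_nonneg (by linarith),
      abs_of_nonneg (by linarith)]

theorem lintegral_enorm_tsub_le_of_endpoint_bounds {X Y : Type*} [MeasurableSpace X]
    [MeasurableSpace Y] {μ : Measure X} {ν : Measure Y} {T : SimpleFunc X ℝ → Y → ℝ}
    (hTadd : ∀ f g : SimpleFunc X ℝ, T (f + g) = T f + T g) {C : ℝ≥0∞} (hC0 : C ≠ 0)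
    (hCtop : C ≠ ∞)
    (hTtop : ∀ f : SimpleFunc X ℝ, f.FinMeasSupp μ → eLpNorm (T f) ∞ ν ≤ C * eLpNorm f ∞ μ)
    (hT1 : ∀ f : SimpleFunc X ℝ, f.FinMeasSupp μ → eLpNorm (T f) 1 ν ≤ C * eLpNorm f 1 μ)
    {f : SimpleFunc X ℝ} (hf : f.FinMeasSupp μ) {t : ℝ} (ht : 0 < t) :
    ∫⁻ y, (‖T f y‖ₑ - ENNReal.ofReal t) ∂ν ≤ ∫⁻ x, (C * ‖f x‖ₑ - ENNReal.ofReal t) ∂μ := by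
  set c := C.toReal
  have hc : 0 < c := ENNReal.toReal_pos hC0 hCtop
  have hC : C = ENNReal.ofReal c := (ENNReal.ofReal_toReal hCtop).symm
  set s := t / c
  have hs : 0 ≤ s := by positivity
  have hcs : c * s = t := mul_div_cancel₀ t hc.ne'
  -- split `f` into a part bounded by `s`, controlled in `L^∞`, and the excess over `s`
  set g := f.map (symmClamp s)
  set h := f.map fun r => r - symmClamp s r
  have hfgh : f = g + h := by ext x; simp [g, h]
  have hg_fin : g.FinMeasSupp μ := hf.map (symmClamp_zero hs)
  have hh_fin : h.FinMeasSupp μ := hf.map (by simp [symmClamp_zero hs])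
  have hTg_top : eLpNorm (T g) ∞ ν ≤ ENNReal.ofReal t := by
    have hg : eLpNorm g ∞ μ ≤ ENNReal.ofReal s := by
      rw [eLpNorm_exponent_top]
      exact eLpNormEssSup_le_of_ae_bound (.of_forall fun x => abs_symmClamp_le hs (f x))
    calc eLpNorm (T g) ∞ ν ≤ C * eLpNorm g ∞ μ := hTtop g hg_fin
      _ ≤ ENNReal.ofReal c * ENNReal.ofReal s := by rw [hC]; gcongr
      _ = ENNReal.ofReal t := by rw [← ENNReal.ofReal_mul hc.le, hcs]
  have hTf_sub : ∀ᵐ y ∂ν, ‖T f y‖ₑ - ENNReal.ofReal t ≤ ‖T h y‖ₑ := by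
    filter_upwards [enorm_ae_le_eLpNormEssSup (T g) ν] with y hy
    rw [tsub_le_iff_left]
    calc ‖T f y‖ₑ = ‖T g y + T h y‖ₑ := by rw [hfgh, hTadd]; rfl
      _ ≤ ‖T g y‖ₑ + ‖T h y‖ₑ := enorm_add_le _ _
      _ ≤ ENNReal.ofReal t + ‖T h y‖ₑ := by
        gcongr; exact hy.trans (eLpNorm_exponent_top (f := T g) ▸ hTg_top)
  have hh : ∀ x, C * ‖h x‖ₑ = C * ‖f x‖ₑ - ENNReal.ofReal t := fun x => by
    rw [Real.enorm_eq_ofReal_abs, Real.enorm_eq_ofReal_abs, SimpleFunc.map_apply,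
      ofReal_abs_sub_symmClamp hs, hC, ← ENNReal.ofReal_mul hc.le, ← ENNReal.ofReal_mul hc.le,
      ← ENNReal.ofReal_sub _ ht.le, mul_sub, hcs]
  calc ∫⁻ y, (‖T f y‖ₑ - ENNReal.ofReal t) ∂ν ≤ ∫⁻ y, ‖T h y‖ₑ ∂ν := lintegral_mono_ae hTf_sub
    _ = eLpNorm (T h) 1 ν := eLpNorm_one_eq_lintegral_enorm.symm
    _ ≤ C * eLpNorm h 1 μ := hT1 h hh_fin
    _ = ∫⁻ x, C * ‖h x‖ₑ ∂μ := by
        rw [eLpNorm_one_eq_lintegral_enorm, lintegral_const_mul' _ _ hCtop]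
    _ = ∫⁻ x, (C * ‖f x‖ₑ - ENNReal.ofReal t) ∂μ := lintegral_congr hh

theorem eLpNorm_le_mul_eLpNorm_of_endpoint_bounds {X Y : Type*} [MeasurableSpace X]
    [MeasurableSpace Y] {μ : Measure X} {ν : Measure Y} [SFinite μ] [SFinite ν]
    {T : SimpleFunc X ℝ → Y → ℝ} (hTadd : ∀ f g : SimpleFunc X ℝ, T (f + g) = T f + T g)
    {C : ℝ≥0∞} (hC0 : C ≠ 0) (hCtop : C ≠ ∞)
    (hTtop : ∀ f : SimpleFunc X ℝ, f.FinMeasSupp μ → eLpNorm (T f) ∞ ν ≤ C * eLpNorm f ∞ μ)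
    (hT1 : ∀ f : SimpleFunc X ℝ, f.FinMeasSupp μ → eLpNorm (T f) 1 ν ≤ C * eLpNorm f 1 μ)
    {p : ℝ≥0∞} (hp1 : 1 < p) (hptop : p ≠ ∞) {f : SimpleFunc X ℝ} (hf : f.FinMeasSupp μ) :
    eLpNorm (T f) p ν ≤ C * eLpNorm f p μ := by
  have hp0 : p ≠ 0 := (zero_lt_one.trans hp1).ne'
  have hq : 1 < p.toReal := by
    simpa using (ENNReal.toReal_lt_toReal ENNReal.one_ne_top hptop).2 hp1
  have hq0 : 0 < p.toReal := by linarith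
  calc eLpNorm (T f) p ν = (∫⁻ y, ‖T f y‖ₑ ^ p.toReal ∂ν) ^ (1 / p.toReal) :=
        eLpNorm_eq_lintegral_rpow_enorm_toReal hp0 hptop
    _ ≤ (∫⁻ x, (C * ‖f x‖ₑ) ^ p.toReal ∂μ) ^ (1 / p.toReal) := by
        gcongr
        exact lintegral_rpow_le_of_forall_lintegral_tsub_le hq (by fun_prop) fun t ht =>
          lintegral_enorm_tsub_le_of_endpoint_bounds hTadd hC0 hCtop hTtop hT1 hf ht
    _ = C * eLpNorm f p μ := by
        simp_rw [eLpNorm_eq_lintegral_rpow_enorm_toReal hp0 hptop,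
          ENNReal.mul_rpow_of_nonneg _ _ hq0.le]
        rw [lintegral_const_mul' _ _ (ENNReal.rpow_ne_top_of_nonneg hq0.le hCtop),
          ENNReal.mul_rpow_of_nonneg _ _ (by positivity), ← ENNReal.rpow_mul,
          mul_one_div_cancel hq0.ne', ENNReal.rpow_one]

theorem riesz_thorin_equal_endpoints_general {X Y : Type*} [MeasurableSpace X] [MeasurableSpace Y]
    (μ : Measure X) (ν : Measure Y) [SigmaFinite μ] [SigmaFinite ν]
    (T : SimpleFunc X ℝ → (Y → ℝ))
    (hTadd : ∀ f g : SimpleFunc X ℝ, T (f + g) = T f + T g)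
    (C : ℝ≥0∞)
    (hTtop : ∀ f : SimpleFunc X ℝ, f.FinMeasSupp μ →
      eLpNorm (T f) ∞ ν ≤ C * eLpNorm f ∞ μ)
    (hT1 : ∀ f : SimpleFunc X ℝ, f.FinMeasSupp μ →
      eLpNorm (T f) 1 ν ≤ C * eLpNorm f 1 μ)
    (p : ℝ≥0∞) (hp : 1 ≤ p) :
    ∀ f : SimpleFunc X ℝ, f.FinMeasSupp μ →
      eLpNorm (T f) p ν ≤ C * eLpNorm f p μ := by
  intro f hf
  rcases hp.eq_or_lt with rfl | hp1
  · exact hT1 f hf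
  rcases eq_or_ne p ∞ with rfl | hptop
  · exact hTtop f hf
  have hTf_zero (h : C * eLpNorm f ∞ μ = 0) : eLpNorm (T f) p ν = 0 :=
    eLpNorm_eq_zero_of_ae_zero (eLpNormEssSup_eq_zero_iff.1 (nonpos_iff_eq_zero.1 (h ▸ hTtop f hf)))
  rcases eq_or_ne C 0 with rfl | hC0
  · simp [hTf_zero (zero_mul _)]
  rcases eq_or_ne C ∞ with rfl | hCtop
  · rcases eq_or_ne (eLpNorm f p μ) 0 with hf0 | hf0
    · have hf_ae : f =ᵐ[μ] 0 :=
        (eLpNorm_eq_zero_iff f.aestronglyMeasurable (zero_lt_one.trans hp1).ne').1 hf0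
      simp [hTf_zero (by rw [eLpNorm_eq_zero_of_ae_zero hf_ae, mul_zero])]
    · simp [ENNReal.top_mul hf0]
  exact eLpNorm_le_mul_eLpNorm_of_endpoint_bounds hTadd hC0 hCtop hTtop hT1 hp1 hptop hf

/-- Riesz–Thorin interpolation at the endpoints `(1,1)` and `(∞,∞)` with a common
constant: if a linear operator `T`, defined on finitely simple functions on `X` with
values in measurable functions on `Y`, satisfies `‖Tf‖_{L^∞} ≤ C‖f‖_{L^∞}` and
`‖Tf‖_{L¹} ≤ C‖f‖_{L¹}`, then `‖Tf‖_{L^p} ≤ C‖f‖_{L^p}` for every `1 ≤ p ≤ ∞`. -/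
theorem riesz_thorin_equal_endpoints {X Y : Type*} [MeasurableSpace X] [MeasurableSpace Y]
    (μ : Measure X) (ν : Measure Y) [SigmaFinite μ] [SigmaFinite ν]
    (T : SimpleFunc X ℝ → (Y → ℝ))
    (hTadd : ∀ f g : SimpleFunc X ℝ, T (f + g) = T f + T g)
    (hTsmul : ∀ (c : ℝ) (f : SimpleFunc X ℝ), T (c • f) = c • T f)
    (C : ℝ≥0∞)
    (hTtop : ∀ f : SimpleFunc X ℝ, f.FinMeasSupp μ →
      eLpNorm (T f) ∞ ν ≤ C * eLpNorm f ∞ μ)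
    (hT1 : ∀ f : SimpleFunc X ℝ, f.FinMeasSupp μ →
      eLpNorm (T f) 1 ν ≤ C * eLpNorm f 1 μ)
    (p : ℝ≥0∞) (hp : 1 ≤ p) :
    ∀ f : SimpleFunc X ℝ, f.FinMeasSupp μ →
      eLpNorm (T f) p ν ≤ C * eLpNorm f p μ :=
  riesz_thorin_equal_endpoints_general μ ν T hTadd C hTtop hT1 p hp
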